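/- Let R be an integral domain, Q a commutative cancellative monoid (written additively), and α : Q → R an injective monoid homomorphism into the multiplicative monoid of R; assume moreover that R is α-flat. Then for all fractional ideals J, J' of Q, one has (J ∩ J')R = JR ∩ J'R as R-submodules of the fraction field Frac(R). -/

import Mathlib

open CategoryTheory

universe u

/-- The ring homomorphism `ℤ[Q] → R` induced by a monoid homomorphism `α` from `Q` to the
multiplicative monoid of `R`; it makes `R` a `ℤ[Q]`-algebra. -/
noncomputable def logRingHom {R Q : Type*} [CommRing R] [AddCommMonoid Q]
    (α : Multiplicative Q →* R) : AddMonoidAlgebra ℤ Q →+* R :=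
  ((AddMonoidAlgebra.lift ℤ R Q) α).toRingHom

/-- For a subset `I ⊆ Q`, the ideal `ℤ[I]` of the monoid algebra `ℤ[Q]` spanned by the
basis elements `e^a` for `a ∈ I`. -/
noncomputable def monoidIdealSpan {Q : Type*} [AddCommMonoid Q] (I : Set Q) :
    Ideal (AddMonoidAlgebra ℤ Q) :=
  Ideal.span ((fun a : Q => (AddMonoidAlgebra.single a 1 : AddMonoidAlgebra ℤ Q)) '' I)

/-- `R` is `α`-flat: `Tor₁^{ℤ[Q]}(ℤ[Q]/ℤ[I], R) = 0` for every ideal `I` of the monoid `Q`. -/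
noncomputable def IsAlphaFlat {R Q : Type u} [CommRing R] [AddCommMonoid Q]
    (α : Multiplicative Q →* R) : Prop :=
  letI : Module (AddMonoidAlgebra ℤ Q) R := (logRingHom α).toModule
  ∀ I : Set Q, (∀ a : Q, ∀ x ∈ I, a + x ∈ I) →
    Limits.IsZero
      (((Tor (ModuleCat (AddMonoidAlgebra ℤ Q)) 1).obj
          (ModuleCat.of (AddMonoidAlgebra ℤ Q)
            (AddMonoidAlgebra ℤ Q ⧸ monoidIdealSpan I))).obj
        (ModuleCat.of (AddMonoidAlgebra ℤ Q) R))

/-- `I` is a fractional ideal of the cancellative monoid `Q` relative to the embedding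
`ι : Q → G = Q^gp` into its Grothendieck group: `I ⊆ G` is nonempty, stable under
translation by elements of `Q`, and `x + I ⊆ Q` for some `x ∈ Q`. -/
def IsFracIdeal {Q G : Type*} [AddCommMonoid Q] [AddCommGroup G] (ι : Q →+ G)
    (I : Set G) : Prop :=
  I.Nonempty ∧ (∀ q : Q, ∀ a ∈ I, ι q + a ∈ I) ∧ (∃ x : Q, ∀ a ∈ I, ι x + a ∈ Set.range ι)

/-!
Translating by an element `q ∈ Q` with `q + J, q + J' ⊆ Q` and multiplying by the unit `β q`
reduces the claim to ideals `I, I'` of the monoid `Q`, i.e. to `(I ∩ I')R = IR ∩ I'R` inside `R`.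
With `a = ℤ[I]` and `b = ℤ[I']` one has `ℤ[I ∩ I'] = a ∩ b` and `ℤ[I ∪ I'] = a + b`, and `IR` is
the image `aR` of `a ⊗ R → R`. Vanishing of `Tor₁(ℤ[Q] ⧸ (a + b), R)` makes `(a + b) ⊗ R → R`
injective, so tensors in `a ⊗ R` and `b ⊗ R` with the same image in `R` already agree in
`(a + b) ⊗ R`; right exactness of `- ⊗ R` on `a ∩ b → a × b → a + b → 0` then lifts them to
`(a ∩ b) ⊗ R`.
-/

open TensorProduct LinearMap

namespace Submodule

variable {A M : Type*} [CommRing A] [AddCommGroup M] [Module A M] (a b : Submodule A M)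

lemma exact_inclusion_prod_coprod :
    Function.Exact ((inclusion inf_le_left).prod (-inclusion inf_le_right) : ↥(a ⊓ b) →ₗ[A] a × b)
      ((inclusion le_sup_left).coprod (inclusion le_sup_right)) := by
  intro y
  constructor
  · intro h
    obtain ⟨u, v⟩ := y
    have hv : (v : M) = -u := eq_neg_of_add_eq_zero_right (congrArg Subtype.val h)
    refine ⟨⟨u, u.2, ?_⟩, Prod.ext rfl (Subtype.ext (by simp [hv]))⟩
    simpa [hv] using v.2
  · rintro ⟨x, rfl⟩
    ext
    simp

lemma coprod_inclusion_surjective :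
    Function.Surjective ((inclusion le_sup_left).coprod (inclusion le_sup_right) :
      a × b →ₗ[A] ↥(a ⊔ b)) := by
  rintro ⟨z, hz⟩
  obtain ⟨u, hu, v, hv, rfl⟩ := mem_sup.1 hz
  exact ⟨(⟨u, hu⟩, ⟨v, hv⟩), rfl⟩

variable {a b} {N : Type*} [AddCommGroup N] [Module A N]

theorem exists_rTensor_inclusion_inf_eq {t₁ : a ⊗[A] N} {t₂ : b ⊗[A] N}
    (h : rTensor N (inclusion le_sup_left) t₁ = rTensor N (inclusion le_sup_right) t₂) :
    ∃ w : ↥(a ⊓ b) ⊗[A] N, rTensor N (inclusion inf_le_left) w = t₁ := by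
  have hexact :=
    rTensor_exact N (exact_inclusion_prod_coprod a b) (coprod_inclusion_surjective a b)
  obtain ⟨w, hw⟩ :=
    (hexact (rTensor N (LinearMap.inl A a b) t₁ - rTensor N (LinearMap.inr A a b) t₂)).1 <| by
    rw [map_sub, ← rTensor_comp_apply, ← rTensor_comp_apply, coprod_inl, coprod_inr, h, sub_self]
  refine ⟨w, ?_⟩
  have := congrArg (rTensor N (LinearMap.fst A a b)) hw
  rwa [← rTensor_comp_apply, fst_prod, map_sub, ← rTensor_comp_apply, ← rTensor_comp_apply,
    fst_comp_inl, fst_comp_inr, rTensor_id, rTensor_zero, LinearMap.zero_apply, sub_zero,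
    LinearMap.id_apply] at this

end Submodule

namespace Ideal

section

variable {A : Type*} [CommRing A] (c : Ideal A) (W : Type*) [AddCommGroup W] [Module A W]

noncomputable def tensorMul : c ⊗[A] W →ₗ[A] W :=
  TensorProduct.lid A W ∘ₗ rTensor W c.subtype

variable {c W}

@[simp]
lemma tensorMul_tmul (s : c) (w : W) : c.tensorMul W (s ⊗ₜ w) = (s : A) • w := by
  simp [tensorMul]

lemma tensorMul_lTensor {W' : Type*} [AddCommGroup W'] [Module A W'] (f : W →ₗ[A] W')
    (t : c ⊗[A] W) : c.tensorMul W' (lTensor c f t) = f (c.tensorMul W t) := by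
  induction t with
  | zero => simp
  | tmul s w => simp
  | add x y hx hy => simp [hx, hy]

lemma tensorMul_rTensor_inclusion {c' : Ideal A} (h : c ≤ c') (t : c ⊗[A] W) :
    c'.tensorMul W (rTensor W (Submodule.inclusion h) t) = c.tensorMul W t := by
  rw [tensorMul, tensorMul, LinearMap.comp_apply, LinearMap.comp_apply, ← rTensor_comp_apply,
    Submodule.subtype_comp_inclusion]

variable (c W) in
lemma range_tensorMul : range (c.tensorMul W) = c • ⊤ := by
  rw [tensorMul, range_comp]
  exact Submodule.map_range_rTensor_subtype_lid

variable (c W) in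
lemma tensorMul_injective [Module.Flat A W] : Function.Injective (c.tensorMul W) :=
  (TensorProduct.lid A W).injective.comp
    (Module.Flat.rTensor_preserves_injective_linearMap _ c.injective_subtype)

lemma one_tmul_eq_zero_iff (x : W) :
    (1 : A ⧸ c) ⊗ₜ[A] x = 0 ↔ x ∈ range (c.tensorMul W) := by
  rw [range_tensorMul, ← ker_tensorProductMk, mem_ker, mk_apply]

lemma exists_one_tmul_eq (y : (A ⧸ c) ⊗[A] W) : ∃ x : W, (1 : A ⧸ c) ⊗ₜ[A] x = y := by
  obtain ⟨x, hx⟩ := Submodule.Quotient.mk_surjective _ (quotTensorEquivQuotSMul W c y)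
  exact ⟨x, by rw [← quotTensorEquivQuotSMul_symm_mk, hx, LinearEquiv.symm_apply_apply]⟩

/-- `hexact` is the vanishing of `Tor₁(A ⧸ c, W)`, computed from the beginning
`P₂ → P₁ → P₀ → W → 0` of a resolution of `W`. -/
theorem tensorMul_injective_of_exact {P₂ P₁ P₀ : Type*} [AddCommGroup P₂] [Module A P₂]
    [AddCommGroup P₁] [Module A P₁] [AddCommGroup P₀] [Module A P₀] [Module.Flat A P₀]
    {d₂ : P₂ →ₗ[A] P₁} {d₁ : P₁ →ₗ[A] P₀} {ε : P₀ →ₗ[A] W}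
    (hd : d₁ ∘ₗ d₂ = 0) (hε : Function.Exact d₁ ε) (hε_surj : Function.Surjective ε)
    (hexact : Function.Exact (lTensor (A ⧸ c) d₂) (lTensor (A ⧸ c) d₁)) :
    Function.Injective (c.tensorMul W) := by
  rw [injective_iff_map_eq_zero]
  intro t ht
  obtain ⟨u, rfl⟩ := lTensor_surjective c hε_surj t
  obtain ⟨p₁, hp₁⟩ : c.tensorMul P₀ u ∈ range d₁ := (hε _).1 (by rw [← tensorMul_lTensor, ht])
  obtain ⟨y, hy⟩ := (hexact _).1 (show lTensor (A ⧸ c) d₁ (1 ⊗ₜ p₁) = 0 by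
    rw [lTensor_tmul, hp₁, one_tmul_eq_zero_iff]
    exact ⟨u, rfl⟩)
  obtain ⟨p₂, rfl⟩ := exists_one_tmul_eq y
  obtain ⟨w, hw⟩ := (one_tmul_eq_zero_iff (c := c) (p₁ - d₂ p₂)).1 <| by
    rw [TensorProduct.tmul_sub, ← lTensor_tmul, hy, sub_self]
  have hwu : lTensor c d₁ w = u := tensorMul_injective c P₀ <| by
    rw [tensorMul_lTensor, hw, map_sub, hp₁, ← LinearMap.comp_apply, hd, LinearMap.zero_apply,
      sub_zero]
  rw [← hwu, ← lTensor_comp_apply, hε.linearMap_comp_eq_zero, lTensor_zero, LinearMap.zero_apply]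

theorem inf_smul_top_of_tensorMul_injective {a b : Ideal A}
    (h : Function.Injective ((a ⊔ b).tensorMul W)) :
    (a ⊓ b) • (⊤ : Submodule A W) = a • ⊤ ⊓ b • ⊤ := by
  refine le_antisymm (le_inf (Submodule.smul_mono_left inf_le_left)
    (Submodule.smul_mono_left inf_le_right)) ?_
  rintro x ⟨hxa, hxb⟩
  rw [← range_tensorMul] at hxa hxb ⊢
  obtain ⟨t₁, rfl⟩ := hxa
  obtain ⟨t₂, ht₂⟩ := hxb
  have ht : rTensor W (Submodule.inclusion le_sup_left) t₁ =
      rTensor W (Submodule.inclusion le_sup_right) t₂ :=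
    h (by rw [tensorMul_rTensor_inclusion, tensorMul_rTensor_inclusion, ht₂])
  obtain ⟨w, rfl⟩ := Submodule.exists_rTensor_inclusion_inf_eq ht
  exact ⟨w, (tensorMul_rTensor_inclusion _ _).symm⟩

end

open Limits MonoidalCategory in
theorem tensorMul_injective_of_isZero_tor {A W : Type u} [CommRing A] [AddCommGroup W]
    [Module A W] (c : Ideal A)
    (hTor : IsZero (((Tor (ModuleCat.{u} A) 1).obj (ModuleCat.of A (A ⧸ c))).obj
      (ModuleCat.of A W))) :
    Function.Injective (c.tensorMul W) := by
  let P := ProjectiveResolution.of (ModuleCat.of A W)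
  have hexact : ((((tensoringLeft _).obj (ModuleCat.of A (A ⧸ c))).mapHomologicalComplex _).obj
      P.complex).ExactAt 1 :=
    (HomologicalComplex.exactAt_iff_isZero_homology _ _).2
      (hTor.of_iso (P.isoLeftDerivedObj _ 1).symm)
  rw [HomologicalComplex.exactAt_iff' _ 2 1 0 (by simp) (by simp),
    ShortComplex.ShortExact.moduleCat_exact_iff_function_exact] at hexact
  have : Module.Projective A (P.complex.X 0) :=
    (IsProjective.iff_projective _).2 (P.projective 0)
  exact tensorMul_injective_of_exact (d₂ := (P.complex.d 2 1).hom) (ε := (P.π.f 0).hom)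
    (ModuleCat.hom_ext_iff.1 (P.complex.d_comp_d 2 1 0))
    ((ShortComplex.ShortExact.moduleCat_exact_iff_function_exact _).1 P.exact₀)
    ((ModuleCat.epi_iff_surjective _).1 inferInstance) hexact

end Ideal

section MonoidIdeal

variable {Q : Type*} [AddCommMonoid Q] {I I' : Set Q}

lemma mem_monoidIdealSpan_iff (hI : ∀ a : Q, ∀ x ∈ I, a + x ∈ I) {f : AddMonoidAlgebra ℤ Q} :
    f ∈ monoidIdealSpan I ↔ ∀ m ∈ f.coeff.support, m ∈ I := by
  refine AddMonoidAlgebra.mem_ideal_span_of'_image.trans (forall₂_congr fun m _ => ?_)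
  exact ⟨fun ⟨m', hm', d, hm⟩ => hm ▸ hI d m' hm', fun hm => ⟨m, hm, 0, (zero_add m).symm⟩⟩

lemma monoidIdealSpan_union (I I' : Set Q) :
    monoidIdealSpan (I ∪ I') = monoidIdealSpan I ⊔ monoidIdealSpan I' := by
  rw [monoidIdealSpan, Set.image_union, Ideal.span_union]; rfl

lemma monoidIdealSpan_inter (hI : ∀ a : Q, ∀ x ∈ I, a + x ∈ I)
    (hI' : ∀ a : Q, ∀ x ∈ I', a + x ∈ I') :
    monoidIdealSpan (I ∩ I') = monoidIdealSpan I ⊓ monoidIdealSpan I' := by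
  have hII' : ∀ a : Q, ∀ x ∈ I ∩ I', a + x ∈ I ∩ I' := fun a x hx => ⟨hI a x hx.1, hI' a x hx.2⟩
  ext f
  rw [Submodule.mem_inf, mem_monoidIdealSpan_iff hII', mem_monoidIdealSpan_iff hI,
    mem_monoidIdealSpan_iff hI']
  exact forall₂_and

end MonoidIdeal

lemma coe_monoidIdealSpan_smul_top {R Q : Type*} [CommRing R] [AddCommMonoid Q]
    (α : Multiplicative Q →* R) (I : Set Q) :
    letI := (logRingHom α).toModule
    ((monoidIdealSpan I • ⊤ : Submodule (AddMonoidAlgebra ℤ Q) R) : Set R) =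
      Submodule.span R ((fun p => α (Multiplicative.ofAdd p)) '' I) := by
  let _ := (logRingHom α).toAlgebra
  rw [Ideal.smul_top_eq_map, Submodule.coe_restrictScalars, monoidIdealSpan, Ideal.map_span,
    Set.image_image]
  congr
  ext p
  exact (AddMonoidAlgebra.lift_single _ _ _).trans (one_smul _ _)

theorem span_image_inter_of_isAlphaFlat {R Q : Type u} [CommRing R] [AddCommMonoid Q]
    {α : Multiplicative Q →* R} (hflat : IsAlphaFlat α) {I I' : Set Q}
    (hI : ∀ a : Q, ∀ x ∈ I, a + x ∈ I) (hI' : ∀ a : Q, ∀ x ∈ I', a + x ∈ I') :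
    Submodule.span R ((fun p => α (Multiplicative.ofAdd p)) '' (I ∩ I')) =
      Submodule.span R ((fun p => α (Multiplicative.ofAdd p)) '' I) ⊓
        Submodule.span R ((fun p => α (Multiplicative.ofAdd p)) '' I') := by
  let _ := (logRingHom α).toModule
  have hTor := hflat (I ∪ I') fun a x hx => hx.imp (hI a x) (hI' a x)
  rw [monoidIdealSpan_union] at hTor
  have hinf := Ideal.inf_smul_top_of_tensorMul_injective
    (Ideal.tensorMul_injective_of_isZero_tor _ hTor)
  rw [← monoidIdealSpan_inter hI hI'] at hinf
  apply SetLike.coe_injective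
  rw [Submodule.coe_inf, ← coe_monoidIdealSpan_smul_top, ← coe_monoidIdealSpan_smul_top,
    ← coe_monoidIdealSpan_smul_top, hinf, Submodule.coe_inf]

section FracIdeal

variable {R Q G K : Type*} [CommRing R] [CommRing K] [Algebra R K] [AddCommMonoid Q]
  [AddCommGroup G] {ι : Q →+ G} {J : Set G}

lemma add_mem_preimage_sub (hJ : ∀ q : Q, ∀ a ∈ J, ι q + a ∈ J) (q : Q) :
    ∀ c : Q, ∀ p ∈ (fun p => ι p - ι q) ⁻¹' J, c + p ∈ (fun p => ι p - ι q) ⁻¹' J :=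
  fun c p hp => by simpa only [Set.mem_preimage, map_add, add_sub_assoc] using hJ c _ hp

lemma add_mem_range_of_add_mem_range {x : Q} (hx : ∀ a ∈ J, ι x + a ∈ Set.range ι) (y : Q) :
    ∀ a ∈ J, ι (y + x) + a ∈ Set.range ι := by
  intro a ha
  obtain ⟨p, hp⟩ := hx a ha
  exact ⟨y + p, by rw [map_add, map_add, hp, add_assoc]⟩

lemma map_mulLeft_span_image {α : Multiplicative Q →* R} {β : G → K}
    (hβadd : ∀ g h : G, β (g + h) = β g * β h)
    (hβι : ∀ q : Q, β (ι q) = algebraMap R K (α (Multiplicative.ofAdd q)))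
    {q : Q} (hq : ∀ a ∈ J, ι q + a ∈ Set.range ι) :
    (Submodule.span R (β '' J)).map (LinearMap.mulLeft R (β (ι q))) =
      (Submodule.span R ((fun p => α (Multiplicative.ofAdd p)) ''
        ((fun p => ι p - ι q) ⁻¹' J))).map (Algebra.linearMap R K) := by
  rw [Submodule.map_span, Submodule.map_span, Set.image_image, Set.image_image]
  congr 1
  ext y
  simp only [Set.mem_image, Set.mem_preimage, LinearMap.mulLeft_apply, Algebra.linearMap_apply,
    ← hβι]
  constructor
  · rintro ⟨a, ha, rfl⟩
    obtain ⟨p, hp⟩ := hq a ha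
    exact ⟨p, by rwa [hp, add_sub_cancel_left], by rw [hp, hβadd]⟩
  · rintro ⟨p, hp, rfl⟩
    exact ⟨ι p - ι q, hp, by rw [← hβadd, add_sub_cancel]⟩

end FracIdeal

theorem alphaFlat_frac_span_inter_general {R Q : Type u} {G : Type*} [CommRing R]
    [AddCommMonoid Q] [AddCommGroup G]
    (ι : Q →+ G)
    (α : Multiplicative Q →* R) (hflat : IsAlphaFlat α)
    (β : G → FractionRing R) (hβ0 : β 0 = 1) (hβadd : ∀ g h : G, β (g + h) = β g * β h)
    (hβι : ∀ q : Q, β (ι q) = algebraMap R (FractionRing R) (α (Multiplicative.ofAdd q)))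
    (J J' : Set G) (hJ : IsFracIdeal ι J) (hJ' : IsFracIdeal ι J') :
    Submodule.span R (β '' (J ∩ J')) =
      Submodule.span R (β '' J) ⊓ Submodule.span R (β '' J') := by
  obtain ⟨x, hx⟩ := hJ.2.2
  obtain ⟨x', hx'⟩ := hJ'.2.2
  have hqJ := add_mem_range_of_add_mem_range hx x'
  have hqJ' : ∀ a ∈ J', ι (x' + x) + a ∈ Set.range ι := by
    rw [add_comm]; exact add_mem_range_of_add_mem_range hx' x
  have hunit : IsUnit (β (ι (x' + x))) :=
    .of_mul_eq_one (β (-ι (x' + x))) (by rw [← hβadd, add_neg_cancel, hβ0])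
  have hmul : Function.Injective (LinearMap.mulLeft R (β (ι (x' + x)))) :=
    hunit.mul_right_injective
  apply Submodule.map_injective_of_injective hmul
  rw [Submodule.map_inf _ hmul, map_mulLeft_span_image hβadd hβι hqJ,
    map_mulLeft_span_image hβadd hβι hqJ',
    map_mulLeft_span_image hβadd hβι fun a ha => hqJ a ha.1,
    Set.preimage_inter, span_image_inter_of_isAlphaFlat hflat (add_mem_preimage_sub hJ.2.1 _)
      (add_mem_preimage_sub hJ'.2.1 _),
    Submodule.map_inf _ (IsFractionRing.injective R (FractionRing R))]

/-- Let `R` be a domain, `Q` a commutative cancellative monoid, and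
`α : Q → R` an injective monoid homomorphism into the multiplicative monoid of `R` such that
`R` is `α`-flat.  Let `ι : Q → G` realize `G` as the Grothendieck group `Q^gp` of `Q`, and let
`β : G → Frac(R)ˣ ⊆ Frac(R)` be the induced group homomorphism `α^gp`.  Then for any two
fractional ideals `J, J'` of `Q`, one has `(J ∩ J')R = JR ∩ J'R` as `R`-submodules of
`Frac(R)`, where `JR` denotes the `R`-submodule of `Frac(R)` generated by `β(J)`. -/
theorem alphaFlat_frac_span_inter {R Q : Type u} {G : Type*} [CommRing R] [IsDomain R]
    [AddCommMonoid Q] [AddCommGroup G]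
    (ι : Q →+ G) (hι : Function.Injective ι) (hgp : ∀ g : G, ∃ a b : Q, g = ι a - ι b)
    (α : Multiplicative Q →* R) (hinj : Function.Injective α) (hflat : IsAlphaFlat α)
    (β : G → FractionRing R) (hβ0 : β 0 = 1) (hβadd : ∀ g h : G, β (g + h) = β g * β h)
    (hβι : ∀ q : Q, β (ι q) = algebraMap R (FractionRing R) (α (Multiplicative.ofAdd q)))
    (J J' : Set G) (hJ : IsFracIdeal ι J) (hJ' : IsFracIdeal ι J') :
    Submodule.span R (β '' (J ∩ J')) =
      Submodule.span R (β '' J) ⊓ Submodule.span R (β '' J') :=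
  alphaFlat_frac_span_inter_general ι α hflat β hβ0 hβadd hβι J J' hJ hJ'
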